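/- arXiv:1406.2835 — 7 statements merged into one kernel-verified Lean document; each statement's English description precedes it below -/
import Mathlib

section
/- Let cₘ = binom(2m+1, m) for m ≥ 0. For each n ≥ 1 let Aₙ be the n×n Hankel matrix with entries (Aₙ)_{ij} = c_{i+j-2} for 1 ≤ i,j ≤ n. Then det Aₙ = 1 for all n ≥ 1. -/
open Finset

private lemma term_zero {i j k : ℕ} (h : i < k) :
    (2*i+1).choose (i+1+k) * (2*j+1).choose (j+1+k) = 0 := by
  rw [Nat.choose_eq_zero_of_lt (by omega), zero_mul]

/-- truncating the sum -/
private lemma sum_trunc (i j K : ℕ) (hK : i < K) :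
    ∑ k ∈ range K, (2*i+1).choose (i+1+k) * (2*j+1).choose (j+1+k)
      = ∑ k ∈ range (i+1), (2*i+1).choose (i+1+k) * (2*j+1).choose (j+1+k) := by
  symm
  apply Finset.sum_subset
  · intro x hx; simp only [mem_range] at *; omega
  · intro x _ hx
    simp only [mem_range, not_lt] at hx
    exact term_zero (by omega)

private lemma sum_trunc' (i j K : ℕ) (hK : j < K) :
    ∑ k ∈ range K, (2*i+1).choose (i+1+k) * (2*j+1).choose (j+1+k)
      = ∑ k ∈ range (j+1), (2*i+1).choose (i+1+k) * (2*j+1).choose (j+1+k) := by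
  symm
  apply Finset.sum_subset
  · intro x hx; simp only [mem_range] at *; omega
  · intro x _ hx
    simp only [mem_range, not_lt] at hx
    rw [Nat.choose_eq_zero_of_lt (show 2*j+1 < j+1+x by omega), mul_zero]

private lemma doubling (i j : ℕ) :
    2 * ∑ k ∈ range (i+j+1), (2*i+1).choose (i+1+k) * (2*j+1).choose (j+1+k)
      = (2*i+1 + (2*j+1)).choose (i+j+1) := by
  rw [Nat.add_choose_eq, Finset.Nat.sum_antidiagonal_eq_sum_range_succ_mk]
  simp only [Nat.succ_eq_add_one]
  have hsplit : (i+j+1) + 1 = (i+1) + (j+1) := by omega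
  conv_rhs => rw [hsplit, Finset.sum_range_add]
  have h1 : ∑ t ∈ range (i+1), (2*i+1).choose t * (2*j+1).choose (i+j+1-t)
      = ∑ k ∈ range (i+1), (2*i+1).choose (i+1+k) * (2*j+1).choose (j+1+k) := by
    rw [← Finset.sum_range_reflect]
    apply Finset.sum_congr rfl
    intro k hk
    simp only [mem_range] at hk
    have h1 : i + 1 - 1 - k = i - k := by omega
    rw [h1]
    have h2 : i + j + 1 - (i - k) = j + 1 + k := by omega
    rw [h2]
    congr 1
    have : i - k = (2*i+1) - (i+1+k) := by omega
    rw [this]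
    exact Nat.choose_symm (by omega)
  have h2 : ∑ k ∈ range (j+1), (2*i+1).choose (i+1+k) * (2*j+1).choose (i+j+1-(i+1+k))
      = ∑ k ∈ range (j+1), (2*i+1).choose (i+1+k) * (2*j+1).choose (j+1+k) := by
    apply Finset.sum_congr rfl
    intro k hk
    simp only [mem_range] at hk
    congr 1
    have h3 : i + j + 1 - (i+1+k) = j - k := by omega
    rw [h3]
    have : j - k = (2*j+1) - (j+1+k) := by omega
    rw [this]
    exact Nat.choose_symm (by omega)
  rw [h1, h2, ← sum_trunc i j (i+j+1) (by omega),
    ← sum_trunc' i j (i+j+1) (by omega)]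
  ring

private lemma key (i j K : ℕ) (hK : i < K) :
    ∑ k ∈ range K, (2*i+1).choose (i+1+k) * (2*j+1).choose (j+1+k)
      = (2*(i+j)+1).choose (i+j) := by
  have hd := doubling i j
  have hc : (2*i+1 + (2*j+1)).choose (i+j+1) = 2 * (2*(i+j)+1).choose (i+j) := by
    have he : 2*i+1 + (2*j+1) = (2*(i+j)+1) + 1 := by omega
    rw [he, Nat.choose_succ_succ (2*(i+j)+1) (i+j)]
    simp only [Nat.succ_eq_add_one]
    have h2 : (2*(i+j)+1).choose (i+j+1) = (2*(i+j)+1).choose (i+j) := by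
      have h4 := Nat.choose_symm (show i+j+1 ≤ 2*(i+j)+1 by omega)
      rw [show 2*(i+j)+1 - (i+j+1) = i+j by omega] at h4
      exact h4.symm
    omega
  rw [sum_trunc i j K hK, ← sum_trunc i j (i+j+1) (by omega)]
  omega

theorem stmt_4 (n : ℕ) (hn : 1 ≤ n) :
    (Matrix.of fun i j : Fin n =>
      (Nat.choose (2 * ((i : ℕ) + (j : ℕ)) + 1) ((i : ℕ) + (j : ℕ)) : ℤ)).det = 1 := by
  set L : Matrix (Fin n) (Fin n) ℤ :=
    Matrix.of fun i k : Fin n => ((2*(i:ℕ)+1).choose ((i:ℕ)+1+(k:ℕ)) : ℤ) with hL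
  have hfact : (Matrix.of fun i j : Fin n =>
      (Nat.choose (2 * ((i : ℕ) + (j : ℕ)) + 1) ((i : ℕ) + (j : ℕ)) : ℤ)) = L * L.transpose := by
    ext i j
    simp only [Matrix.mul_apply, Matrix.transpose_apply, hL, Matrix.of_apply]
    push_cast
    rw [Fin.sum_univ_eq_sum_range (fun k => (((2*(i:ℕ)+1).choose ((i:ℕ)+1+k) : ℤ) *
      ((2*(j:ℕ)+1).choose ((j:ℕ)+1+k) : ℤ))) n]
    rw [show ∑ k ∈ range n, (((2*(i:ℕ)+1).choose ((i:ℕ)+1+k) : ℤ) *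
        ((2*(j:ℕ)+1).choose ((j:ℕ)+1+k) : ℤ))
      = ((∑ k ∈ range n, (2*(i:ℕ)+1).choose ((i:ℕ)+1+k) * (2*(j:ℕ)+1).choose ((j:ℕ)+1+k) : ℕ) : ℤ)
      by push_cast; rfl]
    rw [key (i:ℕ) (j:ℕ) n i.isLt]
  have hLdet : L.det = 1 := by
    rw [Matrix.det_of_lowerTriangular L]
    · have : ∀ i : Fin n, L i i = 1 := by
        intro i
        simp only [hL, Matrix.of_apply]
        have : (i:ℕ)+1+(i:ℕ) = 2*(i:ℕ)+1 := by omega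
        rw [this, Nat.choose_self]; rfl
      simp [this]
    · intro i j hij
      simp only [hL, Matrix.of_apply]
      rw [Nat.choose_eq_zero_of_lt (by simp at hij ⊢; omega)]
      rfl
  rw [hfact, Matrix.det_mul, Matrix.det_transpose, hLdet]
  ring
end

section
/- Let cₘ = binom(2m+1, m) for m ≥ 0. For each n ≥ 1 let Aₙ⁽¹⁾ be the n×n Hankel matrix with entries (Aₙ⁽¹⁾)_{ij} = c_{i+j-1} for 1 ≤ i,j ≤ n. Then det Aₙ⁽¹⁾ = 2n+1 for all n ≥ 1. -/
open Finset Matrix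

-- telescoping alternating-sum identity
lemma vid (k n : ℕ) (hk : k < n) :
    ∑ a ∈ range n, (-1:ℤ)^a * (Nat.choose (2*k+2) (k+2+a)) = Nat.choose (2*k+1) (k+1) := by
  have h : ∀ a, (-1:ℤ)^a * (Nat.choose (2*k+2) (k+2+a))
      = (fun a => (-1:ℤ)^a * Nat.choose (2*k+1) (k+1+a)) a
        - (fun a => (-1:ℤ)^a * Nat.choose (2*k+1) (k+1+a)) (a+1) := by
    intro a
    have hp : Nat.choose (2*k+2) (k+2+a)
        = Nat.choose (2*k+1) (k+1+a) + Nat.choose (2*k+1) (k+2+a) := by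
      rw [show 2*k+2 = (2*k+1)+1 by omega, show k+2+a = (k+1+a)+1 by omega,
        Nat.choose_succ_succ']
    simp only [hp]
    push_cast
    rw [pow_succ]
    ring
  rw [Finset.sum_congr rfl (fun a _ => h a), Finset.sum_range_sub']
  have h0 : Nat.choose (2*k+1) (k+1+n) = 0 := Nat.choose_eq_zero_of_lt (by omega)
  simp [h0]

lemma key_s5 (k l n : ℕ) (hk : k < n) (hl : l < n) :
    2 * Nat.choose (2*(k+l)+3) (k+l+1)
      = Nat.choose (2*k+2) (k+1) * Nat.choose (2*l+2) (l+1)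
        + 2 * ∑ a ∈ range n, Nat.choose (2*k+2) (k+2+a) * Nat.choose (2*l+2) (l+2+a) := by
  have h0 : 2 * Nat.choose (2*(k+l)+3) (k+l+1) = Nat.choose (2*k+2 + (2*l+2)) (k+l+2) := by
    rw [show 2*k+2+(2*l+2) = (2*(k+l)+3)+1 by ring]
    have h1 : Nat.choose (2*(k+l)+3) (k+l+2) = Nat.choose (2*(k+l)+3) (k+l+1) := by
      rw [← Nat.choose_symm (show k+l+2 ≤ 2*(k+l)+3 by omega)]
      congr 1; omega
    have h2 := Nat.choose_succ_succ' (2*(k+l)+3) (k+l+1)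
    rw [show (k+l+1)+1 = k+l+2 by omega] at h2
    omega
  rw [h0, Nat.add_choose_eq, Finset.Nat.sum_antidiagonal_eq_sum_range_succ_mk]
  rw [show (k+l+2).succ = (k+1)+(l+2) by omega, Finset.sum_range_add]
  have hS1 : ∑ i ∈ range (k+1), Nat.choose (2*k+2) i * Nat.choose (2*l+2) (k+l+2-i)
      = ∑ i ∈ range (k+1), Nat.choose (2*k+2) (k+2+i) * Nat.choose (2*l+2) (l+2+i) := by
    rw [← Finset.sum_range_reflect]
    refine Finset.sum_congr rfl fun i hi => ?_
    have hi' : i ≤ k := by simpa using Nat.lt_succ_iff.mp (mem_range.mp hi)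
    have e1 : Nat.choose (2*k+2) (k+1-1-i) = Nat.choose (2*k+2) (k+2+i) := by
      rw [← Nat.choose_symm (show k+2+i ≤ 2*k+2 by omega)]
      congr 1; omega
    have e2 : k+l+2-(k+1-1-i) = l+2+i := by omega
    rw [e1, e2]
  have hS2 : ∑ j ∈ range (l+2), Nat.choose (2*k+2) (k+1+j) * Nat.choose (2*l+2) (k+l+2-(k+1+j))
      = Nat.choose (2*k+2) (k+1) * Nat.choose (2*l+2) (l+1)
        + ∑ j ∈ range (l+1), Nat.choose (2*k+2) (k+2+j) * Nat.choose (2*l+2) (l+2+j) := by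
    rw [Finset.sum_range_succ', add_comm]
    congr 1
    · congr 2
      omega
    · refine Finset.sum_congr rfl fun j hj => ?_
      have hj' : j ≤ l := by simpa using Nat.lt_succ_iff.mp (mem_range.mp hj)
      have e1 : k+1+(j+1) = k+2+j := by omega
      have e2 : Nat.choose (2*l+2) (k+l+2-(k+1+(j+1))) = Nat.choose (2*l+2) (l+2+j) := by
        rw [show k+l+2-(k+1+(j+1)) = l-j by omega,
          ← Nat.choose_symm (show l+2+j ≤ 2*l+2 by omega)]
        congr 1; omega
      rw [e2, e1]
  have ext1 : ∑ i ∈ range (k+1), Nat.choose (2*k+2) (k+2+i) * Nat.choose (2*l+2) (l+2+i)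
      = ∑ i ∈ range n, Nat.choose (2*k+2) (k+2+i) * Nat.choose (2*l+2) (l+2+i) := by
    refine Finset.sum_subset (Finset.range_subset_range.2 (by omega)) fun x _ hx => ?_
    have hkx : k < x := by simp at hx; omega
    rw [Nat.choose_eq_zero_of_lt (show 2*k+2 < k+2+x by omega), zero_mul]
  have ext2 : ∑ i ∈ range (l+1), Nat.choose (2*k+2) (k+2+i) * Nat.choose (2*l+2) (l+2+i)
      = ∑ i ∈ range n, Nat.choose (2*k+2) (k+2+i) * Nat.choose (2*l+2) (l+2+i) := by
    refine Finset.sum_subset (Finset.range_subset_range.2 (by omega)) fun x _ hx => ?_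
    have hlx : l < x := by simp at hx; omega
    rw [Nat.choose_eq_zero_of_lt (show 2*l+2 < l+2+x by omega), mul_zero]
  rw [hS1, hS2, ext1]
  rw [ext2]
  ring

lemma half (k : ℕ) : Nat.choose (2*k+2) (k+1) = 2 * Nat.choose (2*k+1) (k+1) := by
  rw [show 2*k+2 = (2*k+1)+1 from rfl, Nat.choose_succ_succ']
  have : Nat.choose (2*k+1) k = Nat.choose (2*k+1) (k+1) := by
    rw [← Nat.choose_symm (show k+1 ≤ 2*k+1 by omega)]
    congr 1; omega
  omega

theorem stmt_5 (n : ℕ) (hn : 1 ≤ n) :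
    (Matrix.of fun i j : Fin n =>
      (Nat.choose (2 * ((i : ℕ) + (j : ℕ) + 1) + 1) ((i : ℕ) + (j : ℕ) + 1) : ℤ)).det
      = 2 * n + 1 := by
  classical
  set H : Matrix (Fin n) (Fin n) ℤ := Matrix.of fun i j : Fin n =>
      (Nat.choose (2 * ((i : ℕ) + (j : ℕ) + 1) + 1) ((i : ℕ) + (j : ℕ) + 1) : ℤ) with hH
  let Hq : Matrix (Fin n) (Fin n) ℚ := H.map (Int.cast)
  let P : Matrix (Fin n) (Fin n) ℚ :=
    Matrix.of fun k a : Fin n => ((2*(k:ℕ)+2).choose ((k:ℕ)+2+(a:ℕ)) : ℚ)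
  let w : Fin n → ℚ := fun a => (-1)^(a:ℕ)
  let u : Fin n → ℚ := fun a => 2*(-1)^(a:ℕ)
  let A : Matrix (Fin n) (Fin n) ℚ := 1 + Matrix.replicateCol Unit w * Matrix.replicateRow Unit u
  have hAab : ∀ a b : Fin n, A a b = (if a = b then 1 else 0) + w a * u b := by
    intro a b
    simp [A, Matrix.add_apply, Matrix.one_apply, Matrix.mul_apply]
  -- the key vector identity, in ℚ
  have hS : ∀ k : Fin n, (∑ a : Fin n, P k a * w a) = ((2*(k:ℕ)+1).choose ((k:ℕ)+1) : ℚ) := by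
    intro k
    have h1 : (∑ a : Fin n, P k a * w a)
        = ∑ a ∈ Finset.range n, ((-1:ℚ)^a * ((2*(k:ℕ)+2).choose ((k:ℕ)+2+a) : ℚ)) := by
      rw [← Fin.sum_univ_eq_sum_range]
      exact Finset.sum_congr rfl fun a _ => by simp [P, w]; ring
    rw [h1]
    have h2 := vid (k:ℕ) n k.isLt
    have h3 : ((∑ a ∈ Finset.range n, (-1:ℤ)^a * (Nat.choose (2*(k:ℕ)+2) ((k:ℕ)+2+a)) : ℤ) : ℚ)
        = ((Nat.choose (2*(k:ℕ)+1) ((k:ℕ)+1) : ℕ) : ℚ) := by rw [h2]; push_cast; ring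
    push_cast at h3
    exact h3
  -- main factorization
  have hmain : P * ((2:ℚ) • A) * Pᵀ = (2:ℚ) • Hq := by
    ext k l
    have expand : (P * ((2:ℚ) • A) * Pᵀ) k l
        = 2 * (∑ b : Fin n, P k b * P l b)
          + (∑ a : Fin n, P k a * w a) * (2 * ∑ b : Fin n, u b * P l b) := by
      rw [Matrix.mul_apply]
      simp only [Matrix.transpose_apply, Matrix.mul_apply, Matrix.smul_apply, smul_eq_mul]
      have inner : ∀ b : Fin n,
          (∑ a : Fin n, P k a * (2 * A a b))
            = 2 * P k b + (∑ a : Fin n, P k a * w a) * (2 * u b) := by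
        intro b
        have e : ∀ a : Fin n, P k a * (2 * A a b)
            = (if a = b then 2 * P k a else 0) + (P k a * w a) * (2 * u b) := by
          intro a
          rw [hAab a b]
          by_cases h : a = b <;> simp [h] <;> ring
        rw [Finset.sum_congr rfl fun a _ => e a, Finset.sum_add_distrib,
          Finset.sum_ite_eq' Finset.univ b (fun a => 2 * P k a), ← Finset.sum_mul]
        simp
      rw [Finset.sum_congr rfl fun b _ => congrArg (· * P l b) (inner b)]
      set S : ℚ := ∑ a : Fin n, P k a * w a with hSdef
      simp only [add_mul, Finset.sum_add_distrib, Finset.mul_sum]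
      congr 1
      · exact Finset.sum_congr rfl fun b _ => by ring
      · exact Finset.sum_congr rfl fun b _ => by ring
    rw [expand]
    have hT : (∑ b : Fin n, u b * P l b) = 2 * ((2*(l:ℕ)+1).choose ((l:ℕ)+1) : ℚ) := by
      rw [← hS l, Finset.mul_sum]
      exact Finset.sum_congr rfl fun b _ => by simp [u, w]; ring
    rw [hS k, hT]
    -- numeric identity
    have hkey := key_s5 (k:ℕ) (l:ℕ) n k.isLt l.isLt
    have hhk := half (k:ℕ)
    have hhl := half (l:ℕ)
    have hPP : (∑ b : Fin n, P k b * P l b)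
        = ∑ a ∈ Finset.range n,
            ((2*(k:ℕ)+2).choose ((k:ℕ)+2+a) : ℚ) * ((2*(l:ℕ)+2).choose ((l:ℕ)+2+a) : ℚ) := by
      rw [← Fin.sum_univ_eq_sum_range]
      exact Finset.sum_congr rfl fun b _ => by simp [P]
    have hRHS : ((2:ℚ) • Hq) k l = 2 * ((Nat.choose (2*((k:ℕ)+(l:ℕ))+3) ((k:ℕ)+(l:ℕ)+1) : ℕ) : ℚ) := by
      have e : 2*((k:ℕ)+(l:ℕ))+3 = 2 * ((k:ℕ)+(l:ℕ)+1) + 1 := by ring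
      simp only [Matrix.smul_apply, smul_eq_mul, Hq, Matrix.map_apply, hH, Matrix.of_apply, e]
      push_cast
      ring
    rw [hPP, hRHS]
    have hcast := congrArg (fun m : ℕ => (m : ℚ)) hkey
    push_cast at hcast
    have hk2 := congrArg (fun m : ℕ => (m : ℚ)) hhk
    have hl2 := congrArg (fun m : ℕ => (m : ℚ)) hhl
    push_cast at hk2 hl2
    rw [hk2, hl2] at hcast
    linarith [hcast]
  -- determinants
  have hdetP : P.det = 1 := by
    have htri : P.BlockTriangular OrderDual.toDual := by
      intro i j hij
      have hij' : (i:ℕ) < (j:ℕ) := hij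
      simp only [P, Matrix.of_apply]
      rw [Nat.choose_eq_zero_of_lt (by omega)]
      simp
    rw [Matrix.det_of_lowerTriangular P htri]
    have hd : ∀ i : Fin n, P i i = 1 := by
      intro i
      simp only [P, Matrix.of_apply]
      rw [show (i:ℕ)+2+(i:ℕ) = 2*(i:ℕ)+2 by ring, Nat.choose_self]
      simp
    simp [hd]
  have hdetA : A.det = 1 + 2*n := by
    rw [Matrix.det_one_add_replicateCol_mul_replicateRow]
    have huw : ∀ a : Fin n, u a * w a = 2 := by
      intro a
      simp only [u, w]
      rw [mul_assoc, ← pow_add]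
      rw [Even.neg_one_pow ⟨(a:ℕ), by ring⟩]
      ring
    simp [dotProduct, huw, Finset.sum_const, Fintype.card_fin, nsmul_eq_mul]
    ring
  have hdetmain := congrArg Matrix.det hmain
  rw [Matrix.det_mul, Matrix.det_mul, hdetP, Matrix.det_transpose, hdetP,
    Matrix.det_smul, Matrix.det_smul, hdetA] at hdetmain
  simp only [Fintype.card_fin, one_mul, mul_one] at hdetmain
  have h2 : (2:ℚ)^n ≠ 0 := by positivity
  have hq : Hq.det = 2*n+1 := by
    have := mul_left_cancel₀ h2 hdetmain
    linarith [this]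
  have hcast : ((H.det : ℤ) : ℚ) = Hq.det := by
    simpa [Hq] using RingHom.map_det (Int.castRingHom ℚ) H
  rw [hq] at hcast
  exact_mod_cast hcast
end

section
/- Let aₘ = binom(2m−1, m) for m ≥ 1. For each n ≥ 1 let Aₙ be the (n+1)×(n+1) matrix whose first row is (1, 4, 4², …, 4ⁿ) and whose (i+1)-th row (for 1 ≤ i ≤ n) is (aᵢ, a_{i+1}, …, a_{i+n}). Then det Aₙ = (−1)ⁿ. -/
/-- Ballot-type numbers: `c i k = C(2i+1, i+k+1) - C(2i+1, i+k+2)`. -/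
def ballotc (i k : ℕ) : ℤ :=
  (Nat.choose (2 * i + 1) (i + k + 1) : ℤ) - (Nat.choose (2 * i + 1) (i + k + 2) : ℤ)

lemma ballotc_eq_zero {i k : ℕ} (h : i < k) : ballotc i k = 0 := by
  unfold ballotc
  rw [Nat.choose_eq_zero_of_lt (by omega), Nat.choose_eq_zero_of_lt (by omega)]
  simp

lemma ballotc_diag (i : ℕ) : ballotc i i = 1 := by
  unfold ballotc
  rw [show i + i + 1 = 2 * i + 1 by ring, Nat.choose_self,
    Nat.choose_eq_zero_of_lt (by omega)]
  simp

lemma ballotc_zero_zero : ballotc 0 0 = 1 := ballotc_diag 0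

/-- Pascal twice. -/
lemma choose_two_step (N k : ℕ) :
    Nat.choose (N + 2) (k + 2) =
      Nat.choose N k + 2 * Nat.choose N (k + 1) + Nat.choose N (k + 2) := by
  rw [Nat.choose_succ_succ (N + 1) (k + 1), Nat.choose_succ_succ N k,
    Nat.choose_succ_succ N (k + 1)]
  ring

lemma ballotc_rec_succ (i k : ℕ) :
    ballotc (i + 1) (k + 1) = ballotc i (k + 2) + 2 * ballotc i (k + 1) + ballotc i k := by
  unfold ballotc
  have h1 : 2 * (i + 1) + 1 = (2 * i + 1) + 2 := by ring
  have h2 : i + 1 + (k + 1) + 1 = (i + k + 1) + 2 := by ring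
  have h3 : i + 1 + (k + 1) + 2 = (i + k + 2) + 2 := by ring
  rw [h1, h2, h3, choose_two_step, choose_two_step]
  simp only [show i + k + 1 + 1 = i + k + 2 from by ring,
    show i + k + 1 + 2 = i + k + 3 from by ring,
    show i + k + 2 + 1 = i + k + 3 from by ring,
    show i + k + 2 + 2 = i + k + 4 from by ring,
    show i + (k + 1) + 1 = i + k + 2 from by ring,
    show i + (k + 1) + 2 = i + k + 3 from by ring,
    show i + (k + 2) + 1 = i + k + 3 from by ring,
    show i + (k + 2) + 2 = i + k + 4 from by ring]
  push_cast
  ring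

lemma ballotc_rec_zero (i : ℕ) :
    ballotc (i + 1) 0 = ballotc i 1 + 2 * ballotc i 0 := by
  unfold ballotc
  have h1 : 2 * (i + 1) + 1 = (2 * i + 1) + 2 := by ring
  have h2 : i + 1 + 0 + 1 = i + 2 := by ring
  have h3 : i + 1 + 0 + 2 = (i + 1) + 2 := by ring
  rw [h1, h2, h3, choose_two_step, choose_two_step]
  have hsym : Nat.choose (2 * i + 1) i = Nat.choose (2 * i + 1) (i + 1) := by
    have := Nat.choose_symm (n := 2 * i + 1) (k := i) (by omega)
    rw [show 2 * i + 1 - i = i + 1 by omega] at this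
    exact this.symm
  simp only [show i + 1 + 1 = i + 2 from by ring,
    show i + 1 + 2 = i + 3 from by ring,
    show i + 0 + 1 = i + 1 from by ring,
    show i + 0 + 2 = i + 2 from by ring]
  push_cast [hsym]
  ring

/-- Partial sums `T i j N = ∑_{k<N} c i k * c j k`. -/
def ballotT (i j N : ℕ) : ℤ := ∑ k ∈ Finset.range N, ballotc i k * ballotc j k

lemma ballotT_symm (i j N : ℕ) : ballotT i j N = ballotT j i N := by
  unfold ballotT
  exact Finset.sum_congr rfl fun k _ => mul_comm _ _

lemma ballotT_rec {i j N : ℕ} (hN : i + 2 ≤ N) :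
    ballotT (i + 1) j N =
      2 * ballotT i j N + (∑ k ∈ Finset.range N, ballotc i (k + 1) * ballotc j k)
        + (∑ k ∈ Finset.range N, ballotc i k * ballotc j (k + 1)) := by
  unfold ballotT
  obtain ⟨M, rfl⟩ : ∃ M, N = M + 1 := ⟨N - 1, by omega⟩
  rw [Finset.sum_range_succ' (fun k => ballotc (i + 1) k * ballotc j k) M]
  have step : ∀ k, ballotc (i + 1) (k + 1) * ballotc j (k + 1)
      = (ballotc i (k + 2) + 2 * ballotc i (k + 1) + ballotc i k) * ballotc j (k + 1) := by
    intro k; rw [ballotc_rec_succ]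
  simp only [step, ballotc_rec_zero]
  have expand : ∀ k, (ballotc i (k + 2) + 2 * ballotc i (k + 1) + ballotc i k) * ballotc j (k + 1)
      = ballotc i (k + 1 + 1) * ballotc j (k + 1) + 2 * (ballotc i (k + 1) * ballotc j (k + 1))
        + ballotc i k * ballotc j (k + 1) := by intro k; ring
  simp only [expand, Finset.sum_add_distrib]
  -- Now reassemble the three sums into full range (M+1) sums.
  have A1 : (∑ k ∈ Finset.range M, ballotc i (k + 1 + 1) * ballotc j (k + 1))
      + ballotc i 1 * ballotc j 0
      = ∑ k ∈ Finset.range (M + 1), ballotc i (k + 1) * ballotc j k := by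
    rw [Finset.sum_range_succ' (fun k => ballotc i (k + 1) * ballotc j k) M]
  have A2 : (∑ k ∈ Finset.range M, 2 * (ballotc i (k + 1) * ballotc j (k + 1)))
      + 2 * (ballotc i 0 * ballotc j 0)
      = 2 * ∑ k ∈ Finset.range (M + 1), ballotc i k * ballotc j k := by
    rw [Finset.mul_sum, Finset.sum_range_succ' (fun k => 2 * (ballotc i k * ballotc j k)) M]
  have A3 : (∑ k ∈ Finset.range M, ballotc i k * ballotc j (k + 1))
      = ∑ k ∈ Finset.range (M + 1), ballotc i k * ballotc j (k + 1) := by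
    rw [Finset.sum_range_succ]
    have : ballotc i M = 0 := ballotc_eq_zero (by omega)
    rw [this]; ring
  rw [← A1, ← A2, A3]
  ring

lemma ballotT_shift {i j N : ℕ} (hi : i + 2 ≤ N) (hj : j + 2 ≤ N) :
    ballotT (i + 1) j N = ballotT i (j + 1) N := by
  rw [ballotT_rec hi, ballotT_symm i (j + 1), ballotT_rec hj, ballotT_symm j i]
  have h1 : (∑ k ∈ Finset.range N, ballotc i (k + 1) * ballotc j k)
      = ∑ k ∈ Finset.range N, ballotc j k * ballotc i (k + 1) := by
    exact Finset.sum_congr rfl fun k _ => mul_comm _ _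
  have h2 : (∑ k ∈ Finset.range N, ballotc i k * ballotc j (k + 1))
      = ∑ k ∈ Finset.range N, ballotc j (k + 1) * ballotc i k := by
    exact Finset.sum_congr rfl fun k _ => mul_comm _ _
  rw [h1, h2]; ring

lemma ballotT_reduce (j : ℕ) : ∀ i N, i + j + 2 ≤ N → ballotT i j N = ballotT (i + j) 0 N := by
  induction j with
  | zero => intro i N _; rfl
  | succ j ih =>
    intro i N hN
    rw [← ballotT_shift (by omega) (by omega), ih (i + 1) N (by omega)]
    congr 1; omega

lemma ballotT_zero (m N : ℕ) (hN : 1 ≤ N) : ballotT m 0 N = ballotc m 0 := by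
  unfold ballotT
  obtain ⟨M, rfl⟩ : ∃ M, N = M + 1 := ⟨N - 1, by omega⟩
  rw [Finset.sum_range_succ' (fun k => ballotc m k * ballotc 0 k) M]
  have h0 : ∀ k, ballotc 0 (k + 1) = 0 := fun k => ballotc_eq_zero (by omega)
  simp [h0, ballotc_zero_zero]

lemma ballotT_mono {i j P Q : ℕ} (hPQ : P ≤ Q) (hiP : i < P) :
    ballotT i j Q = ballotT i j P := by
  unfold ballotT
  refine (Finset.sum_subset (Finset.range_subset_range.mpr hPQ) fun k _ hk => ?_).symm
  have : ballotc i k = 0 := ballotc_eq_zero (by simp only [Finset.mem_range] at hk; omega)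
  rw [this]; ring

lemma ballotT_ext {i j N M : ℕ} (hN : i < N) (hM : i < M) :
    ballotT i j N = ballotT i j M := by
  rcases le_total N M with h | h
  · rw [ballotT_mono h hN]
  · rw [ballotT_mono h hM]

/-- The key summation identity. -/
lemma ballot_key {i j N : ℕ} (hi : i < N) (hj : j < N) :
    (∑ k ∈ Finset.range N, ballotc i k * ballotc j k) = ballotc (i + j) 0 := by
  have : ballotT i j N = ballotT i j (i + j + 2) := ballotT_ext hi (by omega)
  unfold ballotT at this
  rw [this, show (∑ k ∈ Finset.range (i+j+2), ballotc i k * ballotc j k) = ballotT i j (i+j+2) from rfl,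
    ballotT_reduce j i (i + j + 2) le_rfl, ballotT_zero _ _ (by omega)]

/-- The basic single-variable identity `a_{m+2} - 4 a_{m+1} = - c m 0`. -/
lemma a_step (m : ℕ) :
    (Nat.choose (2 * (m + 2) - 1) (m + 2) : ℤ)
      - 4 * (Nat.choose (2 * (m + 1) - 1) (m + 1) : ℤ) = - ballotc m 0 := by
  have h1 : 2 * (m + 2) - 1 = (2 * m + 1) + 2 := by omega
  have h2 : 2 * (m + 1) - 1 = 2 * m + 1 := by omega
  rw [h1, h2, choose_two_step]
  unfold ballotc
  have hsym : Nat.choose (2 * m + 1) m = Nat.choose (2 * m + 1) (m + 1) := by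
    have := Nat.choose_symm (n := 2 * m + 1) (k := m) (by omega)
    rw [show 2 * m + 1 - m = m + 1 by omega] at this
    exact this.symm
  rw [show m + 0 + 1 = m + 1 by ring, show m + 0 + 2 = m + 2 by ring]
  push_cast [hsym]
  ring


open Matrix in
/-- The matrix from the problem. -/
def mA (n : ℕ) : Matrix (Fin (n + 1)) (Fin (n + 1)) ℤ :=
  Matrix.of fun i j : Fin (n + 1) =>
    if (i : ℕ) = 0 then ((4 : ℤ) ^ (j : ℕ))
    else (Nat.choose (2 * ((i : ℕ) + (j : ℕ)) - 1) ((i : ℕ) + (j : ℕ)) : ℤ)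

/-- Elementary column-operation part. -/
def mE (n : ℕ) : Matrix (Fin (n + 1)) (Fin (n + 1)) ℤ :=
  Matrix.of fun i j : Fin (n + 1) => if (i : ℕ) + 1 = (j : ℕ) then (-4 : ℤ) else 0

def mV (n : ℕ) : Matrix (Fin (n + 1)) (Fin (n + 1)) ℤ := 1 + mE n

def mL (n : ℕ) : Matrix (Fin (n + 1)) (Fin (n + 1)) ℤ :=
  Matrix.of fun i k : Fin (n + 1) =>
    if (i : ℕ) = 0 then (if (k : ℕ) = 0 then (1 : ℤ) else 0)
    else if (k : ℕ) = 0 then (Nat.choose (2 * (i : ℕ) - 1) (i : ℕ) : ℤ)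
    else ballotc ((i : ℕ) - 1) ((k : ℕ) - 1)

def mU (n : ℕ) : Matrix (Fin (n + 1)) (Fin (n + 1)) ℤ :=
  Matrix.of fun k j : Fin (n + 1) =>
    if (k : ℕ) = 0 then (if (j : ℕ) = 0 then (1 : ℤ) else 0)
    else if (j : ℕ) = 0 then 0
    else -ballotc ((j : ℕ) - 1) ((k : ℕ) - 1)

lemma mAE_succ (n : ℕ) (i : Fin (n + 1)) (j : Fin n) :
    (mA n * mE n) i j.succ = -4 * mA n i j.castSucc := by
  rw [Matrix.mul_apply]
  rw [Finset.sum_eq_single j.castSucc]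
  · have : ((j.castSucc : Fin (n+1)) : ℕ) + 1 = ((j.succ : Fin (n+1)) : ℕ) := by simp
    simp [mE, this]
    ring
  · intro k _ hk
    have hne : ¬ ((k : ℕ) = (j : ℕ)) := by
      intro h
      exact hk (Fin.ext (by simp [h]))
    simp [mE, hne]
  · intro h; exact absurd (Finset.mem_univ _) h

lemma mAE_zero (n : ℕ) (i : Fin (n + 1)) :
    (mA n * mE n) i 0 = 0 := by
  rw [Matrix.mul_apply]
  apply Finset.sum_eq_zero
  intro k _
  have : ¬ ((k : ℕ) + 1 = ((0 : Fin (n+1)) : ℕ)) := by simp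
  simp [mE, this]

lemma mLU_apply (n : ℕ) (i j : Fin (n + 1)) :
    (mL n * mU n) i j = mL n i 0 * mU n 0 j + ∑ k : Fin n, mL n i k.succ * mU n k.succ j := by
  rw [Matrix.mul_apply, Fin.sum_univ_succ]

lemma key_mul (n : ℕ) : mA n * mV n = mL n * mU n := by
  ext i j
  rw [mV, Matrix.mul_add, Matrix.mul_one, Matrix.add_apply, mLU_apply]
  induction i using Fin.cases with
  | zero =>
    have hL0 : ∀ k : Fin n, mL n (0 : Fin (n+1)) k.succ = 0 := by
      intro k; simp [mL]
    simp only [hL0, zero_mul, Finset.sum_const_zero, add_zero]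
    induction j using Fin.cases with
    | zero => rw [mAE_zero]; simp [mA, mL, mU]
    | succ j' =>
      rw [mAE_succ]
      have h1 : mA n (0 : Fin (n+1)) j'.succ = 4 ^ ((j' : ℕ) + 1) := by simp [mA]
      have h2 : mA n (0 : Fin (n+1)) j'.castSucc = 4 ^ (j' : ℕ) := by simp [mA]
      have h3 : mU n (0 : Fin (n+1)) j'.succ = 0 := by simp [mU]
      have h4 : mL n (0 : Fin (n+1)) (0 : Fin (n+1)) = 1 := by simp [mL]
      rw [h1, h2, h3, h4]
      rw [pow_succ]
      ring
  | succ i' =>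
    have hvi : ((i'.succ : Fin (n+1)) : ℕ) = (i' : ℕ) + 1 := by simp
    induction j using Fin.cases with
    | zero =>
      have hU0 : ∀ k : Fin n, mU n k.succ (0 : Fin (n+1)) = 0 := by
        intro k; simp [mU]
      simp only [hU0, mul_zero, Finset.sum_const_zero, add_zero]
      rw [mAE_zero]
      have h1 : mA n i'.succ (0 : Fin (n+1)) =
          (Nat.choose (2 * ((i' : ℕ) + 1) - 1) ((i' : ℕ) + 1) : ℤ) := by
        simp [mA, hvi]
      have h2 : mL n i'.succ (0 : Fin (n+1)) =
          (Nat.choose (2 * ((i' : ℕ) + 1) - 1) ((i' : ℕ) + 1) : ℤ) := by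
        simp [mL, hvi]
      have h3 : mU n (0 : Fin (n+1)) (0 : Fin (n+1)) = 1 := by simp [mU]
      rw [h1, h2, h3]
      ring
    | succ j' =>
      have hvj : ((j'.succ : Fin (n+1)) : ℕ) = (j' : ℕ) + 1 := by simp
      rw [mAE_succ]
      have h1 : mA n i'.succ j'.succ =
          (Nat.choose (2 * ((i' : ℕ) + (j' : ℕ) + 2) - 1) ((i' : ℕ) + (j' : ℕ) + 2) : ℤ) := by
        simp only [mA, Matrix.of_apply, hvi, hvj]
        rw [if_neg (by omega)]
        rw [show (i' : ℕ) + 1 + ((j' : ℕ) + 1) = (i' : ℕ) + (j' : ℕ) + 2 from by ring]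
      have h2 : mA n i'.succ j'.castSucc =
          (Nat.choose (2 * ((i' : ℕ) + (j' : ℕ) + 1) - 1) ((i' : ℕ) + (j' : ℕ) + 1) : ℤ) := by
        simp only [mA, Matrix.of_apply, hvi, Fin.coe_castSucc]
        rw [if_neg (by omega)]
        rw [show (i' : ℕ) + 1 + (j' : ℕ) = (i' : ℕ) + (j' : ℕ) + 1 from by ring]
      have h3 : mU n (0 : Fin (n+1)) j'.succ = 0 := by simp [mU]
      have h4 : ∀ k : Fin n, mL n i'.succ k.succ * mU n k.succ j'.succ
          = -(ballotc (i' : ℕ) (k : ℕ) * ballotc (j' : ℕ) (k : ℕ)) := by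
        intro k
        have hvk : ((k.succ : Fin (n+1)) : ℕ) = (k : ℕ) + 1 := by simp
        simp only [mL, mU, Matrix.of_apply, hvi, hvk, hvj]
        rw [if_neg (by omega), if_neg (by omega), if_neg (by omega), if_neg (by omega)]
        simp only [Nat.add_sub_cancel]
        ring
      rw [h1, h2, h3]
      simp only [h4]
      rw [Finset.sum_neg_distrib]
      have h5 : (∑ k : Fin n, ballotc (i' : ℕ) (k : ℕ) * ballotc (j' : ℕ) (k : ℕ))
          = ballotc ((i' : ℕ) + (j' : ℕ)) 0 := by
        rw [Fin.sum_univ_eq_sum_range (fun k => ballotc (i' : ℕ) k * ballotc (j' : ℕ) k)]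
        exact ballot_key i'.isLt j'.isLt
      rw [h5]
      have := a_step ((i' : ℕ) + (j' : ℕ))
      push_cast at this ⊢
      linarith [this]

lemma det_mV (n : ℕ) : (mV n).det = 1 := by
  have ht : (mV n).BlockTriangular id := by
    intro i j hij
    simp only [id_eq] at hij
    have hij' : (j : ℕ) < (i : ℕ) := hij
    simp only [mV, Matrix.add_apply, mE, Matrix.of_apply]
    rw [Matrix.one_apply_ne (ne_of_gt hij), if_neg (by omega)]
    ring
  rw [Matrix.det_of_upperTriangular ht]
  apply Finset.prod_eq_one
  intro i _
  simp only [mV, Matrix.add_apply, Matrix.one_apply_eq, mE, Matrix.of_apply]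
  rw [if_neg (by omega)]
  ring

lemma det_mL (n : ℕ) : (mL n).det = 1 := by
  have ht : (mL n).BlockTriangular OrderDual.toDual := by
    intro i j hij
    have hij' : (i : ℕ) < (j : ℕ) := hij
    simp only [mL, Matrix.of_apply]
    rcases Nat.eq_zero_or_pos (i : ℕ) with h0 | h0
    · rw [if_pos h0, if_neg (by omega)]
    · rw [if_neg (by omega), if_neg (by omega)]
      exact ballotc_eq_zero (by omega)
  rw [Matrix.det_of_lowerTriangular _ ht]
  apply Finset.prod_eq_one
  intro i _
  simp only [mL, Matrix.of_apply]
  rcases Nat.eq_zero_or_pos (i : ℕ) with h0 | h0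
  · rw [if_pos h0, if_pos h0]
  · rw [if_neg (by omega), if_neg (by omega)]
    have : (i : ℕ) - 1 = (i : ℕ) - 1 := rfl
    exact ballotc_diag _

lemma det_mU (n : ℕ) : (mU n).det = (-1) ^ n := by
  have ht : (mU n).BlockTriangular id := by
    intro i j hij
    have hij' : (j : ℕ) < (i : ℕ) := hij
    simp only [mU, Matrix.of_apply]
    rw [if_neg (by omega)]
    rcases Nat.eq_zero_or_pos (j : ℕ) with h0 | h0
    · rw [if_pos h0]
    · rw [if_neg (by omega)]
      rw [ballotc_eq_zero (by omega)]
      ring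
  rw [Matrix.det_of_upperTriangular ht]
  rw [Fin.prod_univ_succ]
  have h0 : mU n (0 : Fin (n+1)) (0 : Fin (n+1)) = 1 := by simp [mU]
  have hs : ∀ i : Fin n, mU n i.succ i.succ = -1 := by
    intro i
    have hvi : ((i.succ : Fin (n+1)) : ℕ) = (i : ℕ) + 1 := by simp
    simp only [mU, Matrix.of_apply, hvi]
    rw [if_neg (by omega), if_neg (by omega)]
    simp [ballotc_diag]
  simp only [h0, hs, one_mul]
  rw [Finset.prod_const]
  simp

theorem stmt_6 (n : ℕ) (hn : 1 ≤ n) :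
    (Matrix.of fun i j : Fin (n + 1) =>
      if (i : ℕ) = 0 then ((4 : ℤ) ^ (j : ℕ))
      else (Nat.choose (2 * ((i : ℕ) + (j : ℕ)) - 1) ((i : ℕ) + (j : ℕ)) : ℤ)).det
      = (-1) ^ n := by
  have h : (mA n).det * (mV n).det = (mL n).det * (mU n).det := by
    rw [← Matrix.det_mul, ← Matrix.det_mul, key_mul]
  rw [det_mV, det_mL, det_mU, mul_one, one_mul] at h
  exact h
end

section
/- Let aₘ = binom(2m−1, m) for m ≥ 1. For each n ≥ 1 let Aₙ′ be the (n+1)×(n+1) matrix whose first row is (1, 4, 4², …, 4ⁿ) and whose (i+1)-th row (for 1 ≤ i ≤ n) is (a_{i+1}, a_{i+2}, …, a_{i+n+1}). Then det Aₙ′ = (−1)ⁿ (n+1). -/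
/-!
Subtracting `4` times each column from the next one clears the first row except for its leading `1`
and turns the other entries into `a (m + 1) - 4 a m = - catalan m`, so the determinant is `(-1) ^ n`
times the Hankel determinant `det (catalan (i + j + 2))_{i, j < n}`. That determinant is `n + 1` by
the factorisation `V M V = X (V W) Xᵀ`, where `X i k = choose (2i+3) (i+k+3)` is unitriangular and
`V`, `W` are diagonal with entries `i + 1`, `i + 2`. Entrywise this is the identity
`∑ₖ (k+1)(k+2) choose (2i+3) (i+k+3) choose (2j+3) (j+k+3) = (i+1)(j+1) catalan (i+j+2)`: the
Vandermonde convolution of `choose (2i+3)` and `choose (2j+3)` weighted by `(i+1-u)(i+2-u)` can be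
evaluated in closed form, and it splits into two copies of the left-hand side.
-/

open Finset Matrix
open scoped Nat

theorem Nat.sum_antidiagonal_descFactorial_mul_choose_mul_choose (a b s r : ℕ) :
    ∑ p ∈ antidiagonal (s + r), p.1.descFactorial r * (a + r).choose p.1 * b.choose p.2 =
      (a + r).descFactorial r * (a + b).choose s := by
  induction r with
  | zero => simp [Nat.add_choose_eq]
  | succ r ih =>
    have hterm (p : ℕ × ℕ) : (p.1 + 1).descFactorial (r + 1) * (a + (r + 1)).choose (p.1 + 1) *
        b.choose p.2 = (a + r + 1) * (p.1.descFactorial r * (a + r).choose p.1 * b.choose p.2) := by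
      have h := Nat.add_one_mul_choose_eq (a + r) p.1
      rw [Nat.succ_descFactorial_succ, ← add_assoc]
      linear_combination p.1.descFactorial r * b.choose p.2 * h.symm
    rw [← add_assoc, Nat.sum_antidiagonal_succ, Nat.zero_descFactorial_succ,
      sum_congr rfl fun p _ ↦ hterm p, ← mul_sum, ih, ← add_assoc, Nat.succ_descFactorial_succ]
    ring

theorem sum_antidiagonal_sub_mul_sub_mul_choose_mul_choose (a b s : ℕ) (c : ℤ) :
    ∑ p ∈ antidiagonal (s + 2),
        (c - p.1) * (c + 1 - p.1) * (a + 2).choose p.1 * b.choose p.2 =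
      (a + 2) * (a + 1) * (a + b).choose s - 2 * c * (a + 2) * (a + b + 1).choose (s + 1)
        + c * (c + 1) * (a + b + 2).choose (s + 2) := by
  have vandermonde (r m t : ℕ) :
      ∑ p ∈ antidiagonal (t + r),
          (p.1.descFactorial r * (m + r).choose p.1 * b.choose p.2 : ℤ) =
        (m + r).descFactorial r * (m + b).choose t := by
    exact_mod_cast Nat.sum_antidiagonal_descFactorial_mul_choose_mul_choose m b t r
  have h0 := vandermonde 0 (a + 2) (s + 2)
  have h1 := vandermonde 1 (a + 1) (s + 1)
  have h2 := vandermonde 2 a s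
  simp only [Nat.descFactorial_zero, Nat.descFactorial_one, Nat.cast_descFactorial_two,
    Nat.cast_one, one_mul, add_zero] at h0 h1 h2
  rw [show a + 2 + b = a + b + 2 by ring] at h0
  rw [show s + 1 + 1 = s + 2 by ring, show a + 1 + 1 = a + 2 by ring,
    show a + 1 + b = a + b + 1 by ring] at h1
  calc _ = ∑ p ∈ antidiagonal (s + 2),
              (p.1 * (p.1 - 1) * (a + 2).choose p.1 * b.choose p.2 : ℤ)
          - 2 * c * ∑ p ∈ antidiagonal (s + 2), (p.1 * (a + 2).choose p.1 * b.choose p.2 : ℤ)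
          + c * (c + 1) *
            ∑ p ∈ antidiagonal (s + 2), ((a + 2).choose p.1 * b.choose p.2 : ℤ) := by
        rw [mul_sum, mul_sum, ← sum_sub_distrib, ← sum_add_distrib]
        exact sum_congr rfl fun p _ ↦ by ring
    _ = _ := by
        rw [h0, h1, h2]
        push_cast
        ring

theorem add_two_mul_catalan_add_one (k : ℕ) :
    (k + 2) * catalan (k + 1) = (2 * k + 2).choose (k + 1) := by
  rw [succ_mul_catalan_eq_centralBinom, Nat.centralBinom_eq_two_mul_choose, mul_add_one]

theorem choose_two_mul_add_three_eq (k : ℕ) :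
    ((2 * k + 3).choose (k + 2) : ℤ) = 4 * (2 * k + 1).choose (k + 1) - catalan (k + 1) := by
  have g1 : (2 * k + 3) * (2 * k + 2).choose (k + 1) = (2 * k + 3).choose (k + 2) * (k + 2) :=
    Nat.add_one_mul_choose_eq _ _
  have g2 : (2 * k + 2).choose (k + 1) = (2 * k + 1).choose k + (2 * k + 1).choose (k + 1) :=
    Nat.choose_succ_succ' _ _
  have g3 := Nat.choose_symm_half k
  have g4 := add_two_mul_catalan_add_one k
  zify at g1 g2 g3 g4
  refine mul_left_cancel₀ (show (k : ℤ) + 2 ≠ 0 by positivity) ?_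
  linear_combination -g1 + g4 + (2 * k + 4) * (g2 - g3)

theorem choose_combination_eq_catalan (k : ℕ) (c : ℤ) :
    (2 * c + 1) * (2 * c) * (2 * k + 2).choose k - 2 * c * (2 * c + 1) * (2 * k + 3).choose (k + 1)
        + c * (c + 1) * (2 * k + 4).choose (k + 2) = 2 * c * (k + 1 - c) * catalan (k + 1) := by
  have f1 : (2 * k + 2).choose (k + 1) * (k + 1) = (2 * k + 2).choose k * (k + 2) := by
    rw [Nat.choose_succ_right_eq, show 2 * k + 2 - k = k + 2 by omega]
  have f2 : (2 * k + 3).choose (k + 1) = (2 * k + 2).choose k + (2 * k + 2).choose (k + 1) :=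
    Nat.choose_succ_succ' _ _
  have f3 : (2 * k + 4) * (2 * k + 3).choose (k + 1) = (2 * k + 4).choose (k + 2) * (k + 2) :=
    Nat.add_one_mul_choose_eq _ _
  have f4 := add_two_mul_catalan_add_one k
  zify at f1 f2 f3 f4
  refine mul_left_cancel₀ (show (k : ℤ) + 2 ≠ 0 by positivity) ?_
  linear_combination -c * (c + 1) * f3 - 2 * c * (k + 1 - c) * f4 - 2 * c ^ 2 * (k + 2) * f2
    - 2 * c * (c + 1) * f1

theorem sum_antidiagonal_sub_mul_sub_mul_choose_mul_choose_eq_catalan (i j : ℕ) :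
    ∑ p ∈ antidiagonal (i + j + 3),
        ((i : ℤ) + 1 - p.1) * (i + 2 - p.1) * (2 * i + 3).choose p.1 * (2 * j + 3).choose p.2 =
      2 * (i + 1) * (j + 1) * catalan (i + j + 2) := by
  have h := sum_antidiagonal_sub_mul_sub_mul_choose_mul_choose (2 * i + 1) (2 * j + 3) (i + j + 1)
    (i + 1)
  have h' := choose_combination_eq_catalan (i + j + 1) (i + 1)
  rw [show (i : ℤ) + 1 + 1 = i + 2 by ring,
    show 2 * i + 1 + (2 * j + 3) = 2 * (i + j + 1) + 2 by ring] at h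
  push_cast at h h' ⊢
  rw [h]
  linear_combination h'

theorem sum_range_choose_mul_choose_eq_catalan {n i j : ℕ} (hi : i < n) (hj : j < n) :
    ∑ k ∈ range n, ((k : ℤ) + 1) * (k + 2) * (2 * i + 3).choose (i + k + 3)
        * (2 * j + 3).choose (j + k + 3) = (i + 1) * (j + 1) * catalan (i + j + 2) := by
  set term : ℕ → ℤ := fun k ↦
    ((k : ℤ) + 1) * (k + 2) * (2 * i + 3).choose (i + k + 3) * (2 * j + 3).choose (j + k + 3)
  have vanish_i : ∀ k ≥ i + 1, term k = 0 := fun k hk ↦ by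
    simp [term, Nat.choose_eq_zero_of_lt (show 2 * i + 3 < i + k + 3 by omega)]
  have vanish_j : ∀ k ≥ j + 1, term k = 0 := fun k hk ↦ by
    simp [term, Nat.choose_eq_zero_of_lt (show 2 * j + 3 < j + k + 3 by omega)]
  -- the weight vanishes at `u = i + 1, i + 2`; the parts `u ≤ i`, `u ≥ i + 3` give `∑ term`
  have halves : ∑ p ∈ antidiagonal (i + j + 3),
      ((i : ℤ) + 1 - p.1) * (i + 2 - p.1) * (2 * i + 3).choose p.1 * (2 * j + 3).choose p.2 =
        ∑ k ∈ range (i + 1), term k + ∑ k ∈ range (j + 1), term k := by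
    rw [Nat.sum_antidiagonal_eq_sum_range_succ
      (fun u v ↦ ((i : ℤ) + 1 - u) * (i + 2 - u) * (2 * i + 3).choose u * (2 * j + 3).choose v),
      show (i + j + 3).succ = (i + 1) + (j + 3) by omega, sum_range_add]
    congr 1
    · rw [← sum_range_reflect]
      refine sum_congr rfl fun k hk ↦ ?_
      have hk : k ≤ i := Nat.lt_succ_iff.mp (mem_range.mp hk)
      rw [show i + 1 - 1 - k = i - k by omega, show i + j + 3 - (i - k) = j + k + 3 by omega,
        Nat.choose_symm_of_eq_add (show 2 * i + 3 = i - k + (i + k + 3) by omega),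
        Nat.cast_sub hk]
      ring
    · conv_lhs => rw [sum_range_succ', sum_range_succ']
      rw [add_assoc, add_eq_left.mpr (by push_cast; ring)]
      refine sum_congr rfl fun k hk ↦ ?_
      have hk : k ≤ j := Nat.lt_succ_iff.mp (mem_range.mp hk)
      rw [show i + 1 + (k + 1 + 1) = i + k + 3 by omega,
        show i + j + 3 - (i + k + 3) = j - k by omega,
        Nat.choose_symm_of_eq_add (show 2 * j + 3 = j - k + (j + k + 3) by omega)]
      push_cast
      ring
  have h := sum_antidiagonal_sub_mul_sub_mul_choose_mul_choose_eq_catalan i j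
  rw [halves, ← eventually_constant_sum vanish_i hi, ← eventually_constant_sum vanish_j hj] at h
  linarith

theorem Finset.prod_range_add_two_eq_factorial (n : ℕ) :
    ∏ k ∈ range n, (k + 2) = (n + 1)! := by
  rw [← prod_range_add_one_eq_factorial, prod_range_succ']
  simp

theorem det_hankel_catalan_add_two (n : ℕ) :
    (of fun i j : Fin n ↦ (catalan (i + j + 2) : ℤ)).det = n + 1 := by
  set M : Matrix (Fin n) (Fin n) ℤ := of fun i j ↦ (catalan (i + j + 2) : ℤ)
  let X : Matrix (Fin n) (Fin n) ℤ :=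
    of fun i k ↦ ((2 * (i : ℕ) + 3).choose (i + k + 3) : ℤ)
  let V : Matrix (Fin n) (Fin n) ℤ := diagonal fun i ↦ (i : ℤ) + 1
  let W : Matrix (Fin n) (Fin n) ℤ := diagonal fun i ↦ (i : ℤ) + 2
  have ldl : V * M * V = X * (V * W) * Xᵀ := by
    ext i j
    calc (V * M * V) i j = (i + 1) * (j + 1) * catalan (i + j + 2) := by
          simp only [V, M, mul_diagonal, diagonal_mul, of_apply]
          ring
      _ = ∑ k ∈ range n, ((k : ℤ) + 1) * (k + 2) * (2 * (i : ℕ) + 3).choose (i + k + 3)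
            * (2 * (j : ℕ) + 3).choose (j + k + 3) :=
          (sum_range_choose_mul_choose_eq_catalan i.isLt j.isLt).symm
      _ = (X * (V * W) * Xᵀ) i j := by
          rw [diagonal_mul_diagonal, mul_apply]
          simp only [X, mul_diagonal, transpose_apply, of_apply]
          rw [Fin.sum_univ_eq_sum_range (fun k ↦ ((2 * (i : ℕ) + 3).choose (i + k + 3) : ℤ)
            * ((k + 1) * (k + 2)) * (2 * (j : ℕ) + 3).choose (j + k + 3)) n]
          exact sum_congr rfl fun k _ ↦ by ring
  have hX : X.det = 1 := by
    rw [det_of_isLowerTriangular X fun i k (hik : i < k) ↦ by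
      simp [X, Nat.choose_eq_zero_of_lt (show 2 * (i : ℕ) + 3 < i + k + 3 by omega)]]
    simp [X, two_mul]
  have hV : V.det = n ! := by
    rw [det_diagonal, Fin.prod_univ_eq_prod_range (fun k ↦ (k : ℤ) + 1)]
    exact_mod_cast prod_range_add_one_eq_factorial n
  have hW : W.det = (n + 1)! := by
    rw [det_diagonal, Fin.prod_univ_eq_prod_range (fun k ↦ (k : ℤ) + 2)]
    exact_mod_cast prod_range_add_two_eq_factorial n
  have hdet := congrArg det ldl
  simp only [det_mul, det_transpose, hX, hV, hW] at hdet
  have hn : (n ! : ℤ) ≠ 0 := by positivity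
  rw [Nat.factorial_succ] at hdet
  push_cast at hdet
  refine mul_left_cancel₀ hn (mul_left_cancel₀ hn ?_)
  linear_combination hdet

theorem Matrix.det_eq_det_of_row_zero_eq_pow {R : Type*} [CommRing R] {n : ℕ}
    (A : Matrix (Fin (n + 1)) (Fin (n + 1)) R) (r : R) (hA : ∀ l, A 0 l = r ^ (l : ℕ)) :
    A.det = (of fun i l : Fin n ↦ A i.succ l.succ - r * A i.succ l.castSucc).det := by
  let S : Matrix (Fin (n + 1)) (Fin (n + 1)) R := of fun j l ↦ if (j : ℕ) + 1 = l then 1 else 0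
  have hE : (1 - r • S).det = 1 := by
    rw [det_of_isUpperTriangular fun j l (hlj : l < j) ↦ by
      simp [S, one_apply_ne hlj.ne', show (j : ℕ) + 1 ≠ l by omega]]
    simp [S]
  rw [← mul_one A.det, ← hE, ← det_mul]
  set B := A * (1 - r • S)
  have hB_zero (i) : B i 0 = A i 0 := by simp [B, S, mul_sub, mul_apply]
  have hB_succ (i) (l : Fin n) : B i l.succ = A i l.succ - r * A i l.castSucc := by
    simp only [B, S, mul_sub, mul_one, sub_apply, smul_apply, smul_eq_mul, mul_apply,
      of_apply, Fin.val_succ, Nat.add_right_cancel_iff, mul_ite, mul_zero]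
    simp_rw [← Fin.val_castSucc l, Fin.val_inj, sum_ite_eq', mem_univ, if_true, mul_comm]
  have hrow (l : Fin n) : B 0 l.succ = 0 := by
    rw [hB_succ, hA, hA, Fin.val_succ, Fin.val_castSucc, pow_succ', sub_self]
  have hminor : B.submatrix Fin.succ Fin.succ =
      of fun i l : Fin n ↦ A i.succ l.succ - r * A i.succ l.castSucc := by
    ext i l
    exact hB_succ i.succ l
  rw [det_succ_row_zero, Fin.sum_univ_succ, Fin.succAbove_zero, hminor]
  simp [hB_zero, hA, hrow]

theorem stmt_7_general (n : ℕ) :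
    (Matrix.of fun i j : Fin (n + 1) =>
      if (i : ℕ) = 0 then ((4 : ℤ) ^ (j : ℕ))
      else (Nat.choose (2 * ((i : ℕ) + (j : ℕ) + 1) - 1) ((i : ℕ) + (j : ℕ) + 1) : ℤ)).det
      = (-1) ^ n * (n + 1) := by
  set A : Matrix (Fin (n + 1)) (Fin (n + 1)) ℤ := Matrix.of fun i j =>
    if (i : ℕ) = 0 then ((4 : ℤ) ^ (j : ℕ))
    else (Nat.choose (2 * ((i : ℕ) + (j : ℕ) + 1) - 1) ((i : ℕ) + (j : ℕ) + 1) : ℤ)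
  have minor : (of fun i l : Fin n ↦ A i.succ l.succ - 4 * A i.succ l.castSucc) =
      -of fun i l : Fin n ↦ (catalan (i + l + 2) : ℤ) := by
    ext i l
    simp only [A, of_apply, neg_apply, Fin.val_succ, Fin.val_castSucc, Nat.succ_ne_zero, if_false]
    generalize (i : ℕ) = a, (l : ℕ) = b
    rw [show 2 * (a + 1 + (b + 1) + 1) - 1 = 2 * (a + b + 1) + 3 by omega,
      show a + 1 + (b + 1) + 1 = a + b + 1 + 2 by omega,
      show 2 * (a + 1 + b + 1) - 1 = 2 * (a + b + 1) + 1 by omega,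
      show a + 1 + b + 1 = a + b + 1 + 1 by omega, choose_two_mul_add_three_eq]
    ring
  rw [det_eq_det_of_row_zero_eq_pow A 4 fun l ↦ by simp [A], minor, det_neg,
    det_hankel_catalan_add_two]
  simp

theorem stmt_7 (n : ℕ) (hn : 1 ≤ n) :
    (Matrix.of fun i j : Fin (n + 1) =>
      if (i : ℕ) = 0 then ((4 : ℤ) ^ (j : ℕ))
      else (Nat.choose (2 * ((i : ℕ) + (j : ℕ) + 1) - 1) ((i : ℕ) + (j : ℕ) + 1) : ℤ)).det
      = (-1) ^ n * (n + 1) :=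
  stmt_7_general n
end

section
/- With T_{n,j}, U_{n,j} as above and aₘ = binom(2m−1, m), for all n ≥ 1 one has Σ_{j=0}^{n} a_{n+j}·T_{n,j} = 1 and Σ_{j=0}^{n+1} a_{n+j}·U_{n,j} = 3. -/
def AVx (p k : ℕ) : ℤ :=
  ((2*p+2*k+1).choose k : ℤ) - ((2*p+2*k+1).choose (2*p+k+2) : ℤ)
def DVx (p k : ℕ) : ℤ :=
  ((2*p+2*k+1).choose (2*p+k+2) : ℤ) - ((2*p+2*k+1).choose (2*p+k+3) : ℤ)
def wtZ (m : ℕ) : ℤ := (Nat.choose (2*m-1) m : ℤ)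

lemma pascal2 (M r : ℕ) :
    (M+2).choose (r+2) = M.choose (r+2) + 2 * M.choose (r+1) + M.choose r := by
  rw [Nat.choose_succ_succ (M+1) (r+1), Nat.choose_succ_succ M r,
    Nat.choose_succ_succ M (r+1)]
  ring

lemma csymm (M i j : ℕ) (h : i + j = M) : M.choose i = M.choose j := by
  subst h; exact Nat.choose_symm_add

lemma DAx (p k : ℕ) : DVx p (k+1) = AVx (p+1) k := by
  simp only [DVx, AVx]
  have F := csymm (2*p+2*k+3) k (2*p+k+3) (by ring)
  zify at F
  ring_nf at F ⊢
  linarith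

lemma keyx (p k : ℕ) :
    AVx (p+1) (k+1) = AVx p (k+1) + 2 * AVx (p+1) k + DVx (p+1) k := by
  cases k with
  | zero =>
    simp only [AVx, DVx]
    have z1 : (3+p*2).choose (4+p*2) = 0 := Nat.choose_eq_zero_of_lt (by omega)
    have z2 : (3+p*2).choose (5+p*2) = 0 := Nat.choose_eq_zero_of_lt (by omega)
    ring_nf
    rw [Nat.choose_one_right, Nat.choose_one_right, Nat.choose_self, Nat.choose_self,
      Nat.choose_zero_right, z1, z2]
    push_cast
    omega
  | succ k =>
    simp only [AVx, DVx]
    have F1 := pascal2 (5+p*2+k*2) k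
    have F2 := pascal2 (5+p*2+k*2) (4+p*2+k)
    have F3 := csymm (5+p*2+k*2) k (5+p*2+k) (by ring)
    zify at F1 F2 F3
    ring_nf at F1 F2 F3 ⊢
    linarith

lemma baseAx (k : ℕ) : 4 * wtZ (k+1) - wtZ (k+2) = AVx 0 k := by
  simp only [wtZ, AVx]
  rw [show 2*(k+1)-1 = 2*k+1 by omega, show 2*(k+2)-1 = 2*k+3 by omega]
  have F1 := pascal2 (2*k+1) k
  have F2 := csymm (2*k+1) k (k+1) (by ring)
  rw [show 2*k+1+2 = 2*k+3 by ring] at F1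
  zify at F1 F2
  ring_nf at F1 F2 ⊢
  linarith

lemma baseBx (k : ℕ) :
    4 * wtZ (k+1) + 3 * wtZ (k+2) - wtZ (k+3) = 3 * AVx 0 k + DVx 0 k := by
  simp only [wtZ, AVx, DVx]
  rw [show 2*(k+1)-1 = 2*k+1 by omega, show 2*(k+2)-1 = 2*k+3 by omega,
    show 2*(k+3)-1 = 2*k+5 by omega]
  have F1 := pascal2 (2*k+1) k
  have F2 := pascal2 (2*k+3) (k+1)
  have F3 := pascal2 (2*k+1) (k+1)
  have F4 := csymm (2*k+3) (k+1) (k+2) (by ring)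
  have F5 := csymm (2*k+1) k (k+1) (by ring)
  zify at F1 F2 F3 F4 F5
  ring_nf at F1 F2 F3 F4 F5 ⊢
  linarith

theorem stmt_9 (T U : ℤ → ℤ → ℤ)
    (hT0 : ∀ n j : ℤ, ¬(0 ≤ j ∧ j ≤ n) → T n j = 0)
    (hU0 : ∀ n j : ℤ, ¬(0 ≤ j ∧ j ≤ n + 1) → U n j = 0)
    (hT01 : T 0 1 = 0) (hU01 : U 0 1 = -1) (hT10 : T 1 0 = 4) (hU10 : U 1 0 = 4)
    (hTrec : ∀ n j : ℤ, 1 ≤ n → T n j = -3 * T (n - 1) j + U (n - 1) j)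
    (hUrec : ∀ n j : ℤ, 1 ≤ n → U n j = -4 * T (n - 1) j + U (n - 1) j + T n (j - 1)) :
    ∀ n : ℕ, 1 ≤ n →
      (∑ j ∈ Finset.range (n + 1),
        (Nat.choose (2 * (n + j) - 1) (n + j) : ℤ) * T n j) = 1 ∧
      (∑ j ∈ Finset.range (n + 2),
        (Nat.choose (2 * (n + j) - 1) (n + j) : ℤ) * U n j) = 3 := by
  -- basic vanishing facts
  have hTneg : ∀ n j : ℤ, j < 0 → T n j = 0 := fun n j h => hT0 n j (by omega)
  have hTbig : ∀ n j : ℤ, n < j → T n j = 0 := fun n j h => hT0 n j (by omega)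
  have hUbig : ∀ n j : ℤ, n + 1 < j → U n j = 0 := fun n j h => hU0 n j (by omega)
  -- row 0 / row 1 values
  have hT1m : T 1 (-1) = 0 := hTneg 1 (-1) (by omega)
  have e1 := hTrec 1 0 le_rfl
  have e2 := hUrec 1 0 le_rfl
  norm_num at e1 e2
  rw [hT1m] at e2
  have hT00 : T 0 0 = 0 := by linarith [hT10, hU10]
  have hU00 : U 0 0 = 4 := by linarith [hT10, hU10]
  have hT11 : T 1 1 = -1 := by
    have := hTrec 1 1 le_rfl; norm_num at this; rw [this, hT01, hU01]; ring
  have hU11 : U 1 1 = 3 := by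
    have := hUrec 1 1 le_rfl; norm_num at this; rw [this, hT01, hU01, hT10]; ring
  have hU12 : U 1 2 = -1 := by
    have := hUrec 1 2 le_rfl; norm_num at this
    rw [this, hTbig 0 2 (by omega), hUbig 0 2 (by omega), hT11]; ring
  -- main induction
  have main : ∀ p : ℕ, ∀ k : ℕ,
      (∑ j ∈ Finset.range (p + 2), wtZ (p+1+j+k) * T (↑(p+1)) ↑j) = AVx p k ∧
      (∑ j ∈ Finset.range (p + 3), wtZ (p+1+j+k) * U (↑(p+1)) ↑j)
        = 3 * AVx p k + DVx p k := by
    intro p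
    induction p with
    | zero =>
      intro k
      constructor
      · rw [Finset.sum_range_succ, Finset.sum_range_succ, Finset.sum_range_zero]
        norm_num
        rw [hT10, hT11, show 0+1+0+k = k+1 by ring, show 0+1+1+k = k+2 by ring]
        have := baseAx k; linarith
      · rw [Finset.sum_range_succ, Finset.sum_range_succ, Finset.sum_range_succ,
          Finset.sum_range_zero]
        norm_num
        rw [hU10, hU11, hU12, show 0+1+0+k = k+1 by ring, show 0+1+1+k = k+2 by ring,
          show 0+1+2+k = k+3 by ring]
        have := baseBx k; linarith
    | succ p ih =>
      -- recurrences cast to ℕ-indexed rows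
      have hT' : ∀ j : ℕ, T (↑(p+2)) ↑j = -3 * T (↑(p+1)) ↑j + U (↑(p+1)) ↑j := by
        intro j
        have h := hTrec (↑(p+2)) ↑j (by push_cast; omega)
        have e : ((p+2 : ℕ) : ℤ) - 1 = ((p+1 : ℕ) : ℤ) := by push_cast; ring
        rw [e] at h; exact h
      have hU' : ∀ j : ℕ, U (↑(p+2)) ↑j
          = -4 * T (↑(p+1)) ↑j + U (↑(p+1)) ↑j + T (↑(p+2)) (↑j - 1) := by
        intro j
        have h := hUrec (↑(p+2)) ↑j (by push_cast; omega)
        have e : ((p+2 : ℕ) : ℤ) - 1 = ((p+1 : ℕ) : ℤ) := by push_cast; ring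
        rw [e] at h; exact h
      -- first: the T-sum for row p+2, for every k
      have hSA : ∀ k : ℕ,
          (∑ j ∈ Finset.range (p + 3), wtZ (p+2+j+k) * T (↑(p+2)) ↑j)
            = AVx (p+1) k := by
        intro k
        have hsplit : (∑ j ∈ Finset.range (p + 3), wtZ (p+2+j+k) * T (↑(p+2)) ↑j)
            = (-3) * (∑ j ∈ Finset.range (p + 3), wtZ (p+1+j+(k+1)) * T (↑(p+1)) ↑j)
              + (∑ j ∈ Finset.range (p + 3), wtZ (p+1+j+(k+1)) * U (↑(p+1)) ↑j) := by
          rw [Finset.mul_sum, ← Finset.sum_add_distrib]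
          refine Finset.sum_congr rfl (fun j _ => ?_)
          rw [hT' j, show p+2+j+k = p+1+j+(k+1) by ring]; ring
        rw [hsplit]
        have hTsum : (∑ j ∈ Finset.range (p + 3), wtZ (p+1+j+(k+1)) * T (↑(p+1)) ↑j)
            = AVx p (k+1) := by
          rw [Finset.sum_range_succ, hTbig (↑(p+1)) (↑(p+2)) (by push_cast; omega)]
          rw [mul_zero, add_zero]; exact (ih (k+1)).1
        rw [hTsum, (ih (k+1)).2, DAx]; ring
      intro k
      constructor
      · exact hSA k
      · -- U-sum for row p+2
        have hsplit : (∑ j ∈ Finset.range (p + 4), wtZ (p+2+j+k) * U (↑(p+2)) ↑j)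
            = ((-4) * (∑ j ∈ Finset.range (p + 4), wtZ (p+1+j+(k+1)) * T (↑(p+1)) ↑j)
              + (∑ j ∈ Finset.range (p + 4), wtZ (p+1+j+(k+1)) * U (↑(p+1)) ↑j))
              + (∑ j ∈ Finset.range (p + 4), wtZ (p+2+j+k) * T (↑(p+2)) (↑j - 1)) := by
          rw [Finset.mul_sum, ← Finset.sum_add_distrib, ← Finset.sum_add_distrib]
          refine Finset.sum_congr rfl (fun j _ => ?_)
          rw [hU' j, show p+2+j+k = p+1+j+(k+1) by ring]; ring
        rw [hsplit]
        have hTsum : (∑ j ∈ Finset.range (p + 4), wtZ (p+1+j+(k+1)) * T (↑(p+1)) ↑j)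
            = AVx p (k+1) := by
          rw [Finset.sum_range_succ, Finset.sum_range_succ,
            hTbig (↑(p+1)) (↑(p+2)) (by push_cast; omega),
            hTbig (↑(p+1)) (↑(p+3)) (by push_cast; omega)]
          rw [mul_zero, add_zero, mul_zero, add_zero]; exact (ih (k+1)).1
        have hUsum : (∑ j ∈ Finset.range (p + 4), wtZ (p+1+j+(k+1)) * U (↑(p+1)) ↑j)
            = 3 * AVx p (k+1) + DVx p (k+1) := by
          rw [Finset.sum_range_succ, hUbig (↑(p+1)) (↑(p+3)) (by push_cast; omega)]
          rw [mul_zero, add_zero]; exact (ih (k+1)).2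
        have hshift : (∑ j ∈ Finset.range (p + 4), wtZ (p+2+j+k) * T (↑(p+2)) (↑j - 1))
            = AVx (p+1) (k+1) := by
          rw [Finset.sum_range_succ' _ (p+3)]
          have h0 : T (↑(p+2)) ((0:ℕ) - 1 : ℤ) = 0 := by
            apply hTneg; norm_num
          rw [show ((0:ℕ):ℤ) - 1 = (0:ℤ) - 1 by norm_num] at h0
          have : (∑ j ∈ Finset.range (p + 3), wtZ (p+2+(j+1)+k) * T (↑(p+2)) (↑(j+1) - 1))
              = ∑ j ∈ Finset.range (p + 3), wtZ (p+2+j+(k+1)) * T (↑(p+2)) ↑j := by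
            refine Finset.sum_congr rfl (fun j _ => ?_)
            have e : ((j+1 : ℕ) : ℤ) - 1 = (j : ℤ) := by push_cast; ring
            rw [e, show p+2+(j+1)+k = p+2+j+(k+1) by ring]
          rw [this, hSA (k+1)]
          have h0' : T (↑(p+2)) (((0:ℕ):ℤ) - 1) = 0 := by apply hTneg; norm_num
          rw [h0', mul_zero, add_zero]
        rw [hTsum, hUsum, hshift, DAx, keyx]
        ring
  -- conclude
  intro n hn
  obtain ⟨m, rfl⟩ : ∃ m, n = m + 1 := ⟨n - 1, by omega⟩
  have h := main m 0
  have hA : AVx m 0 = 1 := by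
    simp only [AVx]
    rw [show 2*m+2*0+1 = 2*m+1 by ring, show 2*m+0+2 = 2*m+2 by ring,
      Nat.choose_zero_right, Nat.choose_eq_zero_of_lt (by omega : 2*m+1 < 2*m+2)]
    norm_num
  have hD : DVx m 0 = 0 := by
    simp only [DVx]
    rw [show 2*m+2*0+1 = 2*m+1 by ring, show 2*m+0+2 = 2*m+2 by ring,
      show 2*m+0+3 = 2*m+3 by ring,
      Nat.choose_eq_zero_of_lt (by omega : 2*m+1 < 2*m+2),
      Nat.choose_eq_zero_of_lt (by omega : 2*m+1 < 2*m+3)]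
    norm_num
  constructor
  · have := h.1
    rw [hA] at this
    rw [← this]
    refine Finset.sum_congr rfl (fun j _ => ?_)
    simp only [wtZ]
    rw [show m+1+j+0 = m+1+j by ring]
  · have := h.2
    rw [hA, hD] at this
    rw [show (3:ℤ) = 3*1+0 by ring, ← this]
    refine Finset.sum_congr rfl (fun j _ => ?_)
    simp only [wtZ]
    rw [show m+1+j+0 = m+1+j by ring]
end

section
/- With T_{n,j}, U_{n,j} as above, for all n ≥ 1 one has Σ_{j=0}^{n} 4^j·T_{n,j} = 0 and Σ_{j=0}^{n+1} 4^j·U_{n,j} = 0. -/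
theorem stmt_10 (T U : ℤ → ℤ → ℤ)
    (hT0 : ∀ n j : ℤ, ¬(0 ≤ j ∧ j ≤ n) → T n j = 0)
    (hU0 : ∀ n j : ℤ, ¬(0 ≤ j ∧ j ≤ n + 1) → U n j = 0)
    (hT01 : T 0 1 = 0) (hU01 : U 0 1 = -1) (hT10 : T 1 0 = 4) (hU10 : U 1 0 = 4)
    (hTrec : ∀ n j : ℤ, 1 ≤ n → T n j = -3 * T (n - 1) j + U (n - 1) j)
    (hUrec : ∀ n j : ℤ, 1 ≤ n → U n j = -4 * T (n - 1) j + U (n - 1) j + T n (j - 1)) :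
    ∀ n : ℕ, 1 ≤ n →
      (∑ j ∈ Finset.range (n + 1), (4 : ℤ) ^ j * T n j) = 0 ∧
      (∑ j ∈ Finset.range (n + 2), (4 : ℤ) ^ j * U n j) = 0 := by
  intro n hn
  induction n, hn using Nat.le_induction with
  | base =>
    have hT11 : T 1 1 = -1 := by
      have := hTrec 1 1 le_rfl; simp at this; rw [this, hT01, hU01]; ring
    have hU11 : U 1 1 = 3 := by
      have := hUrec 1 1 le_rfl; simp at this; rw [this, hT01, hU01, hT10]; ring
    have hU12 : U 1 2 = -1 := by
      have := hUrec 1 2 le_rfl; simp at this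
      have h1 : T 0 2 = 0 := hT0 0 2 (by omega)
      have h2 : U 0 2 = 0 := hU0 0 2 (by omega)
      rw [this, h1, h2, hT11]; ring
    constructor
    · simp [Finset.sum_range_succ, hT10, hT11]
    · simp [Finset.sum_range_succ, hU10, hU11, hU12]
  | succ n hn ih =>
    obtain ⟨ihT, ihU⟩ := ih
    have hn1 : (1:ℤ) ≤ (n:ℤ) + 1 := by omega
    have hTn1 : T n ((n:ℤ)+1) = 0 := hT0 n ((n:ℤ)+1) (by omega)
    have hTn2 : T n ((n:ℤ)+2) = 0 := hT0 n ((n:ℤ)+2) (by omega)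
    have hUn2 : U n ((n:ℤ)+2) = 0 := hU0 n ((n:ℤ)+2) (by omega)
    have key_T : ∑ j ∈ Finset.range (n+2), (4:ℤ)^j * T ((n:ℤ)+1) j = 0 := by
      have hcg : ∀ j ∈ Finset.range (n+2),
          (4:ℤ)^j * T ((n:ℤ)+1) j = -3 * ((4:ℤ)^j * T n j) + (4:ℤ)^j * U n j := by
        intro j _
        rw [hTrec ((n:ℤ)+1) j hn1]
        have h : (n:ℤ) + 1 - 1 = (n:ℤ) := by ring
        rw [h]; ring
      rw [Finset.sum_congr rfl hcg, Finset.sum_add_distrib, ← Finset.mul_sum]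
      have e1 : ∑ j ∈ Finset.range (n+2), (4:ℤ)^j * T n j = 0 := by
        rw [Finset.sum_range_succ]
        push_cast
        rw [hTn1]
        simpa using ihT
      have e2 : ∑ j ∈ Finset.range (n+2), (4:ℤ)^j * U n j = 0 := ihU
      rw [e1, e2]; ring
    have hTm1 : T ((n:ℤ)+1) (-1) = 0 := hT0 ((n:ℤ)+1) (-1) (by omega)
    have hTm1' : T (1+(n:ℤ)) (-1) = 0 := hT0 (1+(n:ℤ)) (-1) (by omega)
    constructor
    · push_cast
      convert key_T using 2 with j
    · push_cast
      have hcg : ∀ j ∈ Finset.range (n+3),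
          (4:ℤ)^j * U ((n:ℤ)+1) j
            = -4 * ((4:ℤ)^j * T n j) + (4:ℤ)^j * U n j + (4:ℤ)^j * T ((n:ℤ)+1) ((j:ℤ)-1) := by
        intro j _
        rw [hUrec ((n:ℤ)+1) j hn1]
        have h : (n:ℤ) + 1 - 1 = (n:ℤ) := by ring
        rw [h]; ring
      have hgoal : ∑ j ∈ Finset.range (n+3), (4:ℤ)^j * U ((n:ℤ)+1) j = 0 := by
        rw [Finset.sum_congr rfl hcg, Finset.sum_add_distrib, Finset.sum_add_distrib,
          ← Finset.mul_sum]
        have e1 : ∑ j ∈ Finset.range (n+3), (4:ℤ)^j * T n j = 0 := by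
          rw [Finset.sum_range_succ, Finset.sum_range_succ]
          push_cast
          rw [hTn1, hTn2]
          simpa using ihT
        have e2 : ∑ j ∈ Finset.range (n+3), (4:ℤ)^j * U n j = 0 := by
          rw [Finset.sum_range_succ]
          push_cast
          rw [hUn2]
          simpa using ihU
        have e3 : ∑ j ∈ Finset.range (n+3), (4:ℤ)^j * T ((n:ℤ)+1) ((j:ℤ)-1) = 0 := by
          rw [Finset.sum_range_succ']
          have h0 : (4:ℤ)^(0:ℕ) * T ((n:ℤ)+1) (((0:ℕ):ℤ) - 1) = 0 := by
            norm_num [hTm1]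
          rw [h0, add_zero]
          have hsh : ∀ j ∈ Finset.range (n+2),
              (4:ℤ)^(j+1) * T ((n:ℤ)+1) ((((j:ℕ)+1 : ℕ) : ℤ) - 1)
                = 4 * ((4:ℤ)^j * T ((n:ℤ)+1) j) := by
            intro j _
            push_cast
            have h : ((j:ℤ) + 1) - 1 = (j:ℤ) := by ring
            rw [h]; ring
          rw [Finset.sum_congr rfl hsh, ← Finset.mul_sum, key_T]
          ring
        rw [e1, e2, e3]; ring
      convert hgoal using 2 with j
end

section
/- With T_{n,j}, U_{n,j} as above and aₘ = binom(2m−1, m), for all n ≥ 2 and all k with 1 ≤ k ≤ n−1 one has Σ_{j=0}^{n} a_{k+j}·T_{n,j} = 0 and Σ_{j=0}^{n+1} a_{k+j}·U_{n,j} = 0. -/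
def Bb (n k : ℕ) : ℤ :=
  if k < n then 0 else ((2 * k - 1).choose (k - n) : ℤ) - (2 * k - 1).choose (k + n)

lemma pascal2_s11 (A m : ℕ) :
    ((A + 2).choose (m + 2) : ℤ) = A.choose (m + 2) + 2 * A.choose (m + 1) + A.choose m := by
  rw [Nat.choose_succ_succ (A + 1) (m + 1), Nat.choose_succ_succ A m, Nat.choose_succ_succ A (m + 1)]
  push_cast; ring

lemma Bb_star (n k : ℕ) (hk : 1 ≤ k) :
    Bb (n + 1) (k + 1) = Bb n k + 2 * Bb (n + 1) k + Bb (n + 2) k := by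
  rcases Nat.lt_or_ge k n with h | h
  · rw [Bb, Bb, Bb, Bb, if_pos (by omega), if_pos (by omega), if_pos (by omega),
      if_pos (by omega)]
    ring
  · rcases Nat.lt_or_ge k (n + 2) with h2 | h2
    · have : k = n ∨ k = n + 1 := by omega
      rcases this with rfl | rfl
      · rw [Bb, Bb, Bb, Bb, if_neg (by omega), if_neg (by omega), if_pos (by omega),
          if_pos (by omega)]
        have e1 : 2 * (k + 1) - 1 = 2 * k + 1 := by omega
        have e2 : k + 1 - (k + 1) = 0 := by omega
        have e3 : 2 * k - 1 + 1 = 2 * k := by omega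
        have e4 : k - k = 0 := by omega
        rw [e1, e2, e4, Nat.choose_zero_right, Nat.choose_zero_right]
        have z1 : (2 * k + 1).choose (k + 1 + (k + 1)) = 0 :=
          Nat.choose_eq_zero_of_lt (by omega)
        have z2 : (2 * k - 1).choose (k + k) = 0 :=
          Nat.choose_eq_zero_of_lt (by omega)
        rw [z1, z2]; ring
      · rw [Bb, Bb, Bb, Bb, if_neg (by omega), if_neg (by omega), if_neg (by omega),
          if_pos (by omega)]
        have e1 : 2 * (n + 1 + 1) - 1 = 2 * n + 3 := by omega
        have e2 : n + 1 + 1 - (n + 1) = 1 := by omega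
        have e3 : 2 * (n + 1) - 1 = 2 * n + 1 := by omega
        have e4 : n + 1 - n = 1 := by omega
        have e5 : n + 1 - (n + 1) = 0 := by omega
        rw [e1, e2, e3, e4, e5, Nat.choose_one_right, Nat.choose_one_right,
          Nat.choose_zero_right]
        have z1 : (2 * n + 3).choose (n + 1 + 1 + (n + 1)) = 1 := by
          have : n + 1 + 1 + (n + 1) = 2 * n + 3 := by omega
          rw [this, Nat.choose_self]
        have z2 : (2 * n + 1).choose (n + 1 + n) = Nat.choose (2 * n + 1) (2 * n + 1) := by
          congr 1; omega
        have z3 : (2 * n + 1).choose (n + 1 + (n + 1)) = 0 :=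
          Nat.choose_eq_zero_of_lt (by omega)
        rw [z1, z2, z3, Nat.choose_self]; push_cast; ring
    · obtain ⟨d, rfl⟩ : ∃ d, k = n + 2 + d := ⟨k - (n + 2), by omega⟩
      rw [Bb, Bb, Bb, Bb, if_neg (by omega), if_neg (by omega), if_neg (by omega),
        if_neg (by omega)]
      have e1 : 2 * (n + 2 + d + 1) - 1 = (2 * n + 2 * d + 3) + 2 := by omega
      have e2 : n + 2 + d + 1 - (n + 1) = d + 2 := by omega
      have e3 : n + 2 + d + 1 + (n + 1) = (2 * n + d + 2) + 2 := by omega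
      have e4 : 2 * (n + 2 + d) - 1 = 2 * n + 2 * d + 3 := by omega
      have e5 : n + 2 + d - n = d + 2 := by omega
      have e6 : n + 2 + d + n = 2 * n + d + 2 := by omega
      have e7 : n + 2 + d - (n + 1) = d + 1 := by omega
      have e8 : n + 2 + d + (n + 1) = 2 * n + d + 2 + 1 := by omega
      have e9 : n + 2 + d - (n + 2) = d := by omega
      have e10 : n + 2 + d + (n + 2) = 2 * n + d + 2 + 2 := by omega
      rw [e1, e2, e3, e4, e5, e6, e7, e8, e9, e10, pascal2_s11 (2 * n + 2 * d + 3) d,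
        pascal2_s11 (2 * n + 2 * d + 3) (2 * n + d + 2)]
      ring

lemma base_id (k : ℕ) (hk : 1 ≤ k) :
    4 * ((2 * k - 1).choose k : ℤ) - (2 * (k + 1) - 1).choose (k + 1) = Bb 1 k := by
  obtain ⟨m, rfl⟩ : ∃ m, k = m + 1 := ⟨k - 1, by omega⟩
  rw [Bb, if_neg (by omega)]
  have e1 : 2 * (m + 1) - 1 = 2 * m + 1 := by omega
  have e2 : 2 * (m + 1 + 1) - 1 = (2 * m + 1) + 2 := by omega
  have e3 : m + 1 - 1 = m := by omega
  have e4 : m + 1 + 1 = m + 2 := by omega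
  rw [e1, e2, e3, e4, pascal2_s11 (2 * m + 1) m]
  have sym : (2 * m + 1).choose (m + 1) = (2 * m + 1).choose m := by
    rw [← Nat.choose_symm (by omega : m ≤ 2 * m + 1)]; congr 1; omega
  rw [sym]; push_cast; ring

theorem stmt_11 (T U : ℤ → ℤ → ℤ)
    (hT0 : ∀ n j : ℤ, ¬(0 ≤ j ∧ j ≤ n) → T n j = 0)
    (hU0 : ∀ n j : ℤ, ¬(0 ≤ j ∧ j ≤ n + 1) → U n j = 0)
    (hT01 : T 0 1 = 0) (hU01 : U 0 1 = -1) (hT10 : T 1 0 = 4) (hU10 : U 1 0 = 4)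
    (hTrec : ∀ n j : ℤ, 1 ≤ n → T n j = -3 * T (n - 1) j + U (n - 1) j)
    (hUrec : ∀ n j : ℤ, 1 ≤ n → U n j = -4 * T (n - 1) j + U (n - 1) j + T n (j - 1)) :
    ∀ n : ℕ, 2 ≤ n → ∀ k : ℕ, 1 ≤ k → k ≤ n - 1 →
      (∑ j ∈ Finset.range (n + 1),
        (Nat.choose (2 * (k + j) - 1) (k + j) : ℤ) * T n j) = 0 ∧
      (∑ j ∈ Finset.range (n + 2),
        (Nat.choose (2 * (k + j) - 1) (k + j) : ℤ) * U n j) = 0 := by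
  have hT1m : T 1 (-1) = 0 := hT0 1 (-1) (by norm_num)
  have h1 : (4 : ℤ) = -3 * T 0 0 + U 0 0 := by
    have h := hTrec 1 0 le_rfl
    rw [hT10] at h; simpa using h
  have h2 : (4 : ℤ) = -4 * T 0 0 + U 0 0 := by
    have h := hUrec 1 0 le_rfl
    rw [hU10] at h; simp at h
    rw [hT1m] at h; linarith
  have hT00 : T 0 0 = 0 := by linarith
  have hU00 : U 0 0 = 4 := by linarith
  have key : ∀ n : ℕ, ∀ k : ℕ, 1 ≤ k →
      (∑ j ∈ Finset.range (n + 1),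
        (Nat.choose (2 * (k + j) - 1) (k + j) : ℤ) * T n j) = Bb n k ∧
      (∑ j ∈ Finset.range (n + 2),
        (Nat.choose (2 * (k + j) - 1) (k + j) : ℤ) * U n j) = 3 * Bb n k + Bb (n + 1) k := by
    intro n
    induction n with
    | zero =>
      intro k hk
      have hB0 : Bb 0 k = 0 := by simp [Bb]
      constructor
      · simp [Finset.sum_range_one, hT00, hB0]
      · rw [Finset.sum_range_succ, Finset.sum_range_one]
        push_cast
        rw [hU00, hU01, hB0]
        have := base_id k hk
        push_cast at this ⊢
        simp only [Nat.add_zero]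
        linarith
    | succ n ih =>
      have rT : ∀ j : ℕ, T ((n : ℤ) + 1) (j : ℤ) = -3 * T n j + U n j := by
        intro j
        have h := hTrec ((n : ℤ) + 1) j (by omega)
        simpa using h
      have rU : ∀ j : ℕ, U ((n : ℤ) + 1) (j : ℤ)
          = -4 * T n j + U n j + T ((n : ℤ) + 1) ((j : ℤ) - 1) := by
        intro j
        have h := hUrec ((n : ℤ) + 1) j (by omega)
        simpa using h
      have hST : ∀ k : ℕ, 1 ≤ k →
          (∑ j ∈ Finset.range (n + 2),
            (Nat.choose (2 * (k + j) - 1) (k + j) : ℤ) * T ((n : ℤ) + 1) j) = Bb (n + 1) k := by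
        intro k hk
        have h1 : (∑ j ∈ Finset.range (n + 2),
              (Nat.choose (2 * (k + j) - 1) (k + j) : ℤ) * T ((n : ℤ) + 1) j)
            = -3 * (∑ j ∈ Finset.range (n + 2),
                (Nat.choose (2 * (k + j) - 1) (k + j) : ℤ) * T (n : ℤ) j)
              + ∑ j ∈ Finset.range (n + 2),
                (Nat.choose (2 * (k + j) - 1) (k + j) : ℤ) * U (n : ℤ) j := by
          rw [Finset.mul_sum, ← Finset.sum_add_distrib]
          refine Finset.sum_congr rfl fun j _ => ?_
          rw [rT j]; ring
        have hTn1 : T (n : ℤ) (((n + 1 : ℕ) : ℤ)) = 0 := hT0 _ _ (by push_cast; omega)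
        rw [h1, Finset.sum_range_succ, hTn1, mul_zero, add_zero, (ih k hk).1, (ih k hk).2]
        ring
      intro k hk
      constructor
      · push_cast
        exact hST k hk
      · push_cast
        have h1 : (∑ j ∈ Finset.range (n + 3),
              (Nat.choose (2 * (k + j) - 1) (k + j) : ℤ) * U ((n : ℤ) + 1) j)
            = -4 * (∑ j ∈ Finset.range (n + 3),
                (Nat.choose (2 * (k + j) - 1) (k + j) : ℤ) * T (n : ℤ) j)
              + (∑ j ∈ Finset.range (n + 3),
                (Nat.choose (2 * (k + j) - 1) (k + j) : ℤ) * U (n : ℤ) j)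
              + ∑ j ∈ Finset.range (n + 3),
                (Nat.choose (2 * (k + j) - 1) (k + j) : ℤ) * T ((n : ℤ) + 1) ((j : ℤ) - 1) := by
          rw [Finset.mul_sum, ← Finset.sum_add_distrib, ← Finset.sum_add_distrib]
          refine Finset.sum_congr rfl fun j _ => ?_
          rw [rU j]; ring
        have hTz1 : T (n : ℤ) (((n + 1 : ℕ) : ℤ)) = 0 := hT0 _ _ (by push_cast; omega)
        have hTz2 : T (n : ℤ) (((n + 2 : ℕ) : ℤ)) = 0 := hT0 _ _ (by push_cast; omega)
        have hUz : U (n : ℤ) (((n + 2 : ℕ) : ℤ)) = 0 := hU0 _ _ (by push_cast; omega)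
        have hTm : T ((n : ℤ) + 1) (((0 : ℕ) : ℤ) - 1) = 0 := hT0 _ _ (by norm_num)
        have hshift : (∑ j ∈ Finset.range (n + 3),
              (Nat.choose (2 * (k + j) - 1) (k + j) : ℤ) * T ((n : ℤ) + 1) ((j : ℤ) - 1))
            = ∑ i ∈ Finset.range (n + 2),
              (Nat.choose (2 * ((k + 1) + i) - 1) ((k + 1) + i) : ℤ) * T ((n : ℤ) + 1) i := by
          rw [Finset.sum_range_succ' _ (n + 2), hTm, mul_zero, add_zero]
          refine Finset.sum_congr rfl fun i _ => ?_
          have e : k + (i + 1) = (k + 1) + i := by ring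
          rw [e]
          push_cast
          ring_nf
        rw [h1, hshift, hST (k + 1) (by omega)]
        rw [Finset.sum_range_succ _ (n + 2), Finset.sum_range_succ _ (n + 1), hTz1, hTz2,
          Finset.sum_range_succ _ (n + 2), hUz]
        rw [(ih k hk).1, (ih k hk).2]
        have hstar := Bb_star n k hk
        push_cast
        linarith
  intro n hn k hk1 hk2
  obtain ⟨h1, h2⟩ := key n k hk1
  have b1 : Bb n k = 0 := if_pos (by omega)
  have b2 : Bb (n + 1) k = 0 := if_pos (by omega)
  rw [h1, h2, b1, b2]
  norm_num
end
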